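/- arXiv:2508.06222 — 5 statements merged into one kernel-verified Lean document; each statement's English description precedes it below -/
import Mathlib

section
/- Let G be a finite group such that the prime order element graph Γ(G) is planar. Then no prime p ≥ 7 divides |G|. -/
/-- The prime order element graph of a group `G`: distinct `x, y` are adjacent
iff `orderOf (x * y)` is prime. -/
def primeOrderGraph (G : Type*) [Group G] : SimpleGraph G where
  Adj x y := x ≠ y ∧ (orderOf (x * y)).Prime
  symm := by
    constructor
    rintro x y ⟨hne, hp⟩
    refine ⟨hne.symm, ?_⟩
    have h : SemiconjBy x (y * x) (x * y) := by
      unfold SemiconjBy; group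
    rwa [SemiconjBy.orderOf_eq x h]
  loopless := by constructor; rintro x ⟨hne, -⟩; exact hne rfl

/-- `H` is a minor of `G`: there are nonempty, connected, pairwise disjoint
branch sets in `G`, one for each vertex of `H`, with edges between branch sets
of adjacent vertices of `H`. -/
def SimpleGraph.HasMinor {V W : Type*} (G : SimpleGraph V) (H : SimpleGraph W) : Prop :=
  ∃ B : W → Set V,
    (∀ w, (B w).Nonempty) ∧
    (∀ w, (G.induce (B w)).Connected) ∧
    (Pairwise fun w₁ w₂ => Disjoint (B w₁) (B w₂)) ∧
    (∀ w₁ w₂, H.Adj w₁ w₂ → ∃ v₁ ∈ B w₁, ∃ v₂ ∈ B w₂, G.Adj v₁ v₂)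

/-- Planarity à la Wagner: no `K₅` minor and no `K₃,₃` minor. -/
def SimpleGraph.IsPlanar {V : Type*} (G : SimpleGraph V) : Prop :=
  ¬ G.HasMinor (⊤ : SimpleGraph (Fin 5)) ∧
  ¬ G.HasMinor (completeBipartiteGraph (Fin 3) (Fin 3))

/-!
An element `g` of prime order `p` (Cauchy) spans a copy of `K₃,₃` in `Γ(G)`: put the powers
`g⁰, g¹, g⁻¹` on one side and `g², g³, g⁻²` on the other. The six exponents differ pairwise by
at most `5`, and every cross sum is a nonzero integer of absolute value at most `4`, so for
`p ≥ 7` the six powers are distinct and each cross product `g^(a + b)` again has order `p`.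
-/

open SimpleGraph

theorem SimpleGraph.IsContained.hasMinor {V W : Type*} {G : SimpleGraph V} {H : SimpleGraph W}
    (h : H ⊑ G) : G.HasMinor H := by
  obtain ⟨f⟩ := h
  refine ⟨fun w => {f w}, fun w => Set.singleton_nonempty _, fun w => ?_, ?_, ?_⟩
  · simp only [induce_singleton_eq_top, connected_top]
  · exact fun w₁ w₂ hw => Set.disjoint_singleton.2 (f.injective.ne hw)
  · exact fun w₁ w₂ hadj => ⟨_, rfl, _, rfl, f.toHom.map_adj hadj⟩

theorem SimpleGraph.IsPlanar.not_completeBipartiteGraph_isContained {V : Type*}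
    {G : SimpleGraph V} (hG : G.IsPlanar) : ¬ completeBipartiteGraph (Fin 3) (Fin 3) ⊑ G :=
  fun h => hG.2 h.hasMinor

section PrimeOrder

variable {G : Type*} [Group G] {g : G}

theorem zpow_ne_zpow_of_not_dvd_sub {a b : ℤ} (h : ¬ (orderOf g : ℤ) ∣ a - b) :
    g ^ a ≠ g ^ b :=
  fun hab => h (zpow_eq_zpow_iff_modEq.1 hab).symm.dvd

variable {p : ℕ} [Fact p.Prime]

theorem orderOf_zpow_of_orderOf_eq_prime (hg : orderOf g = p) {n : ℤ} (hn : ¬ (p : ℤ) ∣ n) :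
    orderOf (g ^ n) = p := by
  refine orderOf_eq_prime ?_ fun h => hn ?_
  · rw [← zpow_natCast, ← zpow_mul, mul_comm, zpow_mul, zpow_natCast, ← hg, pow_orderOf_eq_one,
      one_zpow]
  · rwa [zpow_eq_one_iff_modEq, hg, Int.modEq_zero_iff_dvd] at h

theorem primeOrderGraph_adj_zpow (hg : orderOf g = p) {a b : ℤ}
    (hsub : ¬ (p : ℤ) ∣ a - b) (hadd : ¬ (p : ℤ) ∣ a + b) :
    (primeOrderGraph G).Adj (g ^ a) (g ^ b) := by
  refine ⟨zpow_ne_zpow_of_not_dvd_sub (hg ▸ hsub), ?_⟩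
  rw [← zpow_add, orderOf_zpow_of_orderOf_eq_prime hg hadd]
  exact Fact.out

end PrimeOrder

def k33Exponent : Fin 3 ⊕ Fin 3 → ℤ := Sum.elim ![0, 1, -1] ![2, 3, -2]

theorem natAbs_k33Exponent_sub_mem_Icc {v w : Fin 3 ⊕ Fin 3} (h : v ≠ w) :
    (k33Exponent v - k33Exponent w).natAbs ∈ Finset.Icc 1 5 := by
  revert v w
  decide

theorem natAbs_k33Exponent_add_mem_Icc {v w : Fin 3 ⊕ Fin 3}
    (h : (completeBipartiteGraph (Fin 3) (Fin 3)).Adj v w) :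
    (k33Exponent v + k33Exponent w).natAbs ∈ Finset.Icc 1 4 := by
  revert v w
  simp only [completeBipartiteGraph_adj]
  decide

theorem not_natCast_dvd_of_natAbs_mem_Icc {p m : ℕ} {n : ℤ} (hn : n.natAbs ∈ Finset.Icc 1 m)
    (hm : m < p) : ¬ (p : ℤ) ∣ n := by
  rw [Finset.mem_Icc] at hn
  rw [Int.natCast_dvd]
  exact Nat.not_dvd_of_pos_of_lt hn.1 (by omega)

theorem completeBipartiteGraph_isContained_primeOrderGraph {G : Type*} [Group G] {g : G}
    {p : ℕ} [Fact p.Prime] (hg : orderOf g = p) (hp : 7 ≤ p) :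
    completeBipartiteGraph (Fin 3) (Fin 3) ⊑ primeOrderGraph G := by
  have hsub {v w} (h : v ≠ w) : ¬ (p : ℤ) ∣ k33Exponent v - k33Exponent w :=
    not_natCast_dvd_of_natAbs_mem_Icc (natAbs_k33Exponent_sub_mem_Icc h) (by omega)
  refine ⟨⟨⟨fun w => g ^ k33Exponent w, fun {v w} hvw => ?_⟩, fun v w hvw => ?_⟩⟩
  · exact primeOrderGraph_adj_zpow hg (hsub hvw.ne)
      (not_natCast_dvd_of_natAbs_mem_Icc (natAbs_k33Exponent_add_mem_Icc hvw) (by omega))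
  · by_contra h
    exact zpow_ne_zpow_of_not_dvd_sub (hg ▸ hsub h) hvw

theorem stmt_8 {G : Type*} [Group G] [Fintype G]
    (hplanar : (primeOrderGraph G).IsPlanar) :
    ∀ p : ℕ, p.Prime → 7 ≤ p → ¬ p ∣ Fintype.card G := by
  intro p hp hp7 hdvd
  have := Fact.mk hp
  obtain ⟨g, hg⟩ := exists_prime_orderOf_dvd_card p hdvd
  exact hplanar.not_completeBipartiteGraph_isContained
    (completeBipartiteGraph_isContained_primeOrderGraph hg hp7)
end

section
/- Let p ≥ 7 be a prime. Then the prime order element graph Γ(ℤ_p) contains K₅ as a minor; in particular, Γ(ℤ_p) is not planar. -/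
/-!
In a group of prime order every element other than `1` has prime order, so in `Γ(ℤ_p)` distinct
`x, y` are adjacent iff `x + y ≠ 0`. Among the residues `0, …, 5` the sums of distinct pairs lie
in `1, …, 9`, so for `p ≥ 7` the only non-edges are `{2, 5}` and `{3, 4}` (and only when `p = 7`).
Contracting the edge `{4, 5}` then leaves a `K₅` on `{0}, {1}, {2}, {3}, {4, 5}`.
-/

open Function SimpleGraph

namespace SimpleGraph

variable {V V' W : Type*} {G : SimpleGraph V} {G' : SimpleGraph V'} {H : SimpleGraph W}

lemma induce_connected_of_forall_adj {s : Set V} {c : V} (hc : c ∈ s)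
    (hadj : ∀ v ∈ s, v ≠ c → G.Adj v c) : (G.induce s).Connected := by
  have : Nonempty s := ⟨⟨c, hc⟩⟩
  have hreach : ∀ v : s, (G.induce s).Reachable v ⟨c, hc⟩ := by
    rintro ⟨v, hv⟩
    by_cases hvc : v = c
    · subst hvc; rfl
    · exact Adj.reachable (G := G.induce s) (hadj v hv hvc)
  exact ⟨fun u v => (hreach u).trans (hreach v).symm⟩

lemma hasMinor_of_surjective (φ : V → W) (hφ : Surjective φ)
    (hconn : ∀ w, (G.induce (φ ⁻¹' {w})).Connected)
    (hadj : ∀ w₁ w₂, H.Adj w₁ w₂ → ∃ v₁ v₂, φ v₁ = w₁ ∧ φ v₂ = w₂ ∧ G.Adj v₁ v₂) :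
    G.HasMinor H := by
  refine ⟨fun w => φ ⁻¹' {w}, hφ, hconn, fun w₁ w₂ hne => ?_, fun w₁ w₂ h => ?_⟩
  · exact (Set.disjoint_singleton.2 hne).preimage φ
  · obtain ⟨v₁, v₂, rfl, rfl, hv⟩ := hadj w₁ w₂ h
    exact ⟨v₁, rfl, v₂, rfl, hv⟩

lemma induce_image_connected (f : G →g G') {s : Set V} (hs : (G.induce s).Connected) :
    (G'.induce (f '' s)).Connected := by
  let g : G.induce s →g G'.induce (f '' s) :=
    { toFun := fun v => ⟨f v, Set.mem_image_of_mem f v.2⟩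
      map_rel' := f.map_rel }
  refine hs.map g ?_
  rintro ⟨_, v, hv, rfl⟩
  exact ⟨⟨v, hv⟩, rfl⟩

lemma HasMinor.of_isContained (hGG' : G ⊑ G') (hG : G.HasMinor H) : G'.HasMinor H := by
  obtain ⟨f⟩ := hGG'
  obtain ⟨B, hne, hconn, hdisj, hadj⟩ := hG
  refine ⟨fun w => f '' B w, fun w => (hne w).image f,
    fun w => induce_image_connected f.toHom (hconn w),
    fun w₁ w₂ h => (Set.disjoint_image_iff f.injective).2 (hdisj h), fun w₁ w₂ h => ?_⟩
  obtain ⟨v₁, hv₁, v₂, hv₂, hv⟩ := hadj w₁ w₂ h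
  exact ⟨f v₁, Set.mem_image_of_mem f hv₁, f v₂, Set.mem_image_of_mem f hv₂, f.toHom.map_adj hv⟩

end SimpleGraph

lemma orderOf_eq_natCard_of_ne_one {G : Type*} [Group G] (hG : (Nat.card G).Prime) {g : G}
    (hg : g ≠ 1) : orderOf g = Nat.card G :=
  ((Nat.dvd_prime hG).1 (orderOf_dvd_natCard g)).resolve_left (mt orderOf_eq_one_iff.1 hg)

lemma primeOrderGraph_adj_iff_of_natCard_prime {G : Type*} [Group G] (hG : (Nat.card G).Prime)
    {x y : G} : (primeOrderGraph G).Adj x y ↔ x ≠ y ∧ x * y ≠ 1 := by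
  refine and_congr_right fun _ => ⟨fun h hxy => ?_, fun hxy => ?_⟩
  · rw [hxy, orderOf_one] at h
    exact Nat.not_prime_one h
  · rwa [orderOf_eq_natCard_of_ne_one hG hxy]

lemma primeOrderGraph_zmod_adj_iff {p : ℕ} (hp : p.Prime) {x y : ZMod p} :
    (primeOrderGraph (Multiplicative (ZMod p))).Adj (.ofAdd x) (.ofAdd y) ↔ x ≠ y ∧ x + y ≠ 0 := by
  have : Fact p.Prime := ⟨hp⟩
  have hcard : (Nat.card (Multiplicative (ZMod p))).Prime := by
    rwa [Nat.card_eq_fintype_card, Fintype.card_multiplicative, ZMod.card]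
  rw [primeOrderGraph_adj_iff_of_natCard_prime hcard, ← ofAdd_add, Ne, Ne, ofAdd_eq_one,
    Multiplicative.ofAdd.injective.eq_iff]

def sumNeSevenGraph : SimpleGraph (Fin 6) where
  Adj i j := i ≠ j ∧ (i : ℕ) + j ≠ 7
  symm := ⟨fun _ _ h => ⟨h.1.symm, by omega⟩⟩
  loopless := ⟨fun _ h => h.1 rfl⟩

instance : DecidableRel sumNeSevenGraph.Adj := fun i j =>
  inferInstanceAs (Decidable (i ≠ j ∧ (i : ℕ) + j ≠ 7))

lemma sumNeSevenGraph_hasMinor_top : sumNeSevenGraph.HasMinor (⊤ : SimpleGraph (Fin 5)) := by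
  let φ : Fin 6 → Fin 5 := fun v => ⟨min v 4, by omega⟩
  have hφ (w : Fin 5) : φ w.castSucc = w := by
    ext
    simp only [Fin.val_castSucc, inf_eq_left, φ]
    omega
  refine hasMinor_of_surjective φ (fun w => ⟨w.castSucc, hφ w⟩)
    (fun w => induce_connected_of_forall_adj (hφ w) ?_) ?_
  · rintro v rfl
    revert v
    decide
  · simp only [top_adj]; decide

lemma sumNeSevenGraph_isContained {p : ℕ} (hp : p.Prime) (hp7 : 7 ≤ p) :
    sumNeSevenGraph ⊑ primeOrderGraph (Multiplicative (ZMod p)) := by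
  have hinj : Injective fun i : Fin 6 => ((i : ℕ) : ZMod p) := fun i j hij => by
    have := (ZMod.natCast_eq_natCast_iff' _ _ _).1 hij
    rwa [Nat.mod_eq_of_lt (by omega), Nat.mod_eq_of_lt (by omega), Fin.val_inj] at this
  refine ⟨⟨⟨fun i => .ofAdd ((i : ℕ) : ZMod p), fun {i j} hij => ?_⟩,
    Multiplicative.ofAdd.injective.comp hinj⟩⟩
  rw [primeOrderGraph_zmod_adj_iff hp]
  have hne : (i : ℕ) ≠ j := Fin.val_ne_of_ne hij.1
  have h7 : (i : ℕ) + j ≠ 7 := hij.2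
  refine ⟨hinj.ne hij.1, fun hsum => ?_⟩
  rw [← Nat.cast_add, ZMod.natCast_eq_zero_iff] at hsum
  have hsum_eq : (i : ℕ) + j = p := Nat.eq_of_dvd_of_lt_two_mul (by omega) hsum (by omega)
  have : p ≤ 9 := by omega
  interval_cases p <;> first | omega | norm_num at hp

theorem stmt_9 (p : ℕ) (hp : p.Prime) (hp7 : 7 ≤ p) :
    (primeOrderGraph (Multiplicative (ZMod p))).HasMinor
        (⊤ : SimpleGraph (Fin 5)) ∧
    ¬ (primeOrderGraph (Multiplicative (ZMod p))).IsPlanar := by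
  have hminor := sumNeSevenGraph_hasMinor_top.of_isContained (sumNeSevenGraph_isContained hp hp7)
  exact ⟨hminor, fun h => h.1 hminor⟩
end

section
/- Let G be a finite abelian 2-group and suppose x₁, …, x_l ∈ G are pairwise distinct with o(xᵢxⱼ) = 2 for all i ≠ j and l ≥ 3. Then for each i, o(xᵢ) divides 4; moreover either all xᵢ have order dividing 2, or all xᵢ have order 4 and xᵢ² = xⱼ² for all i, j. -/
theorem stmt_14 {G : Type*} [CommGroup G] [Fintype G] (hG : IsPGroup 2 G)
    (l : ℕ) (hl : 3 ≤ l) (x : Fin l → G) (hinj : Function.Injective x)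
    (h : ∀ i j, i ≠ j → orderOf (x i * x j) = 2) :
    (∀ i, orderOf (x i) ∣ 4) ∧
    ((∀ i, orderOf (x i) ∣ 2) ∨
      ((∀ i, orderOf (x i) = 4) ∧ ∀ i j, (x i) ^ 2 = (x j) ^ 2)) := by
  have key : ∀ i j : Fin l, i ≠ j → x i ^ 2 * x j ^ 2 = 1 := by
    intro i j hij
    have h2 : (x i * x j) ^ 2 = 1 := by
      rw [← h i j hij]; exact pow_orderOf_eq_one _
    rw [mul_pow] at h2
    exact h2
  have avoid : ∀ i j : Fin l, ∃ k : Fin l, k ≠ i ∧ k ≠ j := by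
    intro i j
    by_cases h0i : i = ⟨0, by omega⟩
    · by_cases h1j : j = ⟨1, by omega⟩
      · exact ⟨⟨2, by omega⟩, by simp [h0i, Fin.ext_iff], by simp [h1j, Fin.ext_iff]⟩
      · by_cases h0j : j = ⟨0, by omega⟩
        · exact ⟨⟨1, by omega⟩, by simp [h0i, Fin.ext_iff], by simp [h0j, Fin.ext_iff]⟩
        · by_cases h2j : j = ⟨2, by omega⟩
          · exact ⟨⟨1, by omega⟩, by simp [h0i, Fin.ext_iff], by simp [h2j, Fin.ext_iff]⟩
          · exact ⟨⟨1, by omega⟩, by simp [h0i, Fin.ext_iff],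
              by
                by_cases h1j' : j = ⟨1, by omega⟩
                · exact absurd h1j' h1j
                · exact fun hh => h1j' hh.symm⟩
    · by_cases h0j : j = ⟨0, by omega⟩
      · -- i ≠ 0, j = 0; pick among 1,2 something ≠ i
        by_cases h1i : i = ⟨1, by omega⟩
        · exact ⟨⟨2, by omega⟩, by simp [h1i, Fin.ext_iff], by simp [h0j, Fin.ext_iff]⟩
        · exact ⟨⟨1, by omega⟩, fun hh => h1i hh.symm, by simp [h0j, Fin.ext_iff]⟩
      · exact ⟨⟨0, by omega⟩, fun hh => h0i hh.symm, fun hh => h0j hh.symm⟩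
  have sq4 : ∀ i, x i ^ 4 = 1 := by
    intro i
    obtain ⟨j, hji, _⟩ := avoid i i
    obtain ⟨k, hki, hkj⟩ := avoid i j
    have hj : x j ^ 2 = (x i ^ 2)⁻¹ :=
      eq_inv_of_mul_eq_one_left (key j i hji)
    have hk : x k ^ 2 = (x i ^ 2)⁻¹ :=
      eq_inv_of_mul_eq_one_left (key k i hki)
    have e3 := key j k (Ne.symm hkj)
    rw [hj, hk] at e3
    have : x i ^ 2 * x i ^ 2 = 1 := by
      have := congrArg (·⁻¹) e3
      simpa [mul_inv_rev] using this
    calc x i ^ 4 = x i ^ 2 * x i ^ 2 := by rw [← pow_add]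
    _ = 1 := this
  have sqeq : ∀ i j, x i ^ 2 = x j ^ 2 := by
    intro i j
    by_cases hij : i = j
    · rw [hij]
    · obtain ⟨k, hki, hkj⟩ := avoid i j
      have hi : x i ^ 2 = (x k ^ 2)⁻¹ :=
        eq_inv_of_mul_eq_one_left (key i k (Ne.symm hki))
      have hjj : x j ^ 2 = (x k ^ 2)⁻¹ :=
        eq_inv_of_mul_eq_one_left (key j k (Ne.symm hkj))
      rw [hi, hjj]
  refine ⟨fun i => orderOf_dvd_of_pow_eq_one (sq4 i), ?_⟩
  by_cases hall : ∀ i, x i ^ 2 = 1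
  · exact Or.inl fun i => orderOf_dvd_of_pow_eq_one (hall i)
  · push_neg at hall
    obtain ⟨i0, hi0⟩ := hall
    refine Or.inr ⟨fun i => ?_, sqeq⟩
    have hi : x i ^ (2 ^ 1) ≠ 1 := by
      rw [pow_one, sqeq i i0]; exact hi0
    have h4 : x i ^ (2 ^ 2) = 1 := by
      simpa using sq4 i
    have := orderOf_eq_prime_pow (p := 2) (n := 1) hi h4
    simpa using this
end

section
/- Let G be a finite abelian 2-group and let H ≤ G be a maximal elementary abelian 2-subgroup with H ≅ (ℤ/2)^t. Then the maximum size of a set M ⊆ G of pairwise distinct elements with o(xy) prime for all distinct x, y ∈ M equals 2^t. -/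
theorem stmt_15 {G : Type*} [CommGroup G] [Fintype G] (hG : IsPGroup 2 G)
    (H : Subgroup G) (t : ℕ)
    (helem : ∀ h ∈ H, h ^ 2 = 1)
    (hmax : ∀ K : Subgroup G, (∀ k ∈ K, k ^ 2 = 1) → H ≤ K → K = H)
    (hcard : Nat.card H = 2 ^ t) :
    IsGreatest
      {n : ℕ | ∃ M : Finset G, M.card = n ∧
        ∀ x ∈ M, ∀ y ∈ M, x ≠ y → (orderOf (x * y)).Prime}
      (2 ^ t) := by
  classical
  -- any prime order in a 2-group is 2
  have horder : ∀ g : G, (orderOf g).Prime → g ^ 2 = 1 := by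
    intro g hp
    obtain ⟨k, hk⟩ := hG g
    have hdvd : orderOf g ∣ 2 ^ k := orderOf_dvd_of_pow_eq_one hk
    have h2 : orderOf g = 2 := by
      have := (Nat.Prime.dvd_of_dvd_pow hp hdvd)
      exact (Nat.prime_dvd_prime_iff_eq hp Nat.prime_two).mp this
    rw [← h2]; exact pow_orderOf_eq_one g
  -- the 2-torsion subgroup
  let K : Subgroup G :=
    { carrier := {g : G | g ^ 2 = 1}
      one_mem' := one_pow 2
      mul_mem' := by
        intro a b ha hb
        simp only [Set.mem_setOf_eq] at *
        rw [mul_pow, ha, hb, one_mul]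
      inv_mem' := by
        intro a ha
        simp only [Set.mem_setOf_eq] at *
        rw [inv_pow, ha, inv_one] }
  have hKmem : ∀ g : G, g ∈ K ↔ g ^ 2 = 1 := fun g => Iff.rfl
  have hKH : K = H := hmax K (fun k hk => hk) (fun h hh => helem h hh)
  have hKcard : Nat.card K = 2 ^ t := by rw [hKH, hcard]
  constructor
  · -- membership: M = H
    refine ⟨(H : Set G).toFinset, ?_, ?_⟩
    · rw [Set.toFinset_card, ← Nat.card_eq_fintype_card] at *
      exact hcard.symm ▸ rfl
    · intro x hx y hy hxy
      rw [Set.mem_toFinset] at hx hy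
      have hxyH : x * y ∈ H := H.mul_mem hx hy
      have hne : x * y ≠ 1 := by
        intro h
        apply hxy
        have hx2 : x * x = 1 := by have := helem x hx; rwa [pow_two] at this
        have : y = x⁻¹ := by
          rw [eq_inv_iff_mul_eq_one, mul_comm]; exact h
        rw [this]; exact eq_inv_of_mul_eq_one_left hx2
      have : orderOf (x * y) = 2 := by
        haveI : Fact (Nat.Prime 2) := ⟨Nat.prime_two⟩
        exact orderOf_eq_prime (helem _ hxyH) hne
      rw [this]; exact Nat.prime_two
  · -- upper bound
    rintro n ⟨M, rfl, hM⟩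
    rcases M.eq_empty_or_nonempty with rfl | ⟨a, ha⟩
    · simp
    · have hmap : ∀ x ∈ M.erase a, a * x ∈ ((K : Set G).toFinset.erase 1) := by
        intro x hx
        obtain ⟨hxa, hxM⟩ := Finset.mem_erase.mp hx
        have hp := hM a ha x hxM (Ne.symm hxa)
        have hne : a * x ≠ 1 := by
          intro h
          rw [h] at hp
          simp only [orderOf_one] at hp
          exact Nat.not_prime_one hp
        refine Finset.mem_erase.mpr ⟨hne, ?_⟩
        rw [Set.mem_toFinset]
        exact (hKmem _).mpr (horder _ hp)
      have hinj : Set.InjOn (fun x => a * x) (M.erase a) := by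
        intro x _ y _ h
        exact mul_left_cancel h
      have hle : (M.erase a).card ≤ ((K : Set G).toFinset.erase 1).card :=
        Finset.card_le_card_of_injOn _ hmap hinj
      have hKfin : (K : Set G).toFinset.card = 2 ^ t := by
        rw [Set.toFinset_card, ← Nat.card_eq_fintype_card]
        exact hKcard
      have h1K : (1 : G) ∈ (K : Set G).toFinset := by
        rw [Set.mem_toFinset]; exact K.one_mem
      have herase : ((K : Set G).toFinset.erase 1).card = 2 ^ t - 1 := by
        rw [Finset.card_erase_of_mem h1K, hKfin]
      have hMcard : M.card = (M.erase a).card + 1 := by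
        rw [Finset.card_erase_of_mem ha]
        exact (Nat.succ_pred_eq_of_pos (Finset.card_pos.mpr ⟨a, ha⟩)).symm
      have : (M.erase a).card ≤ 2 ^ t - 1 := herase ▸ hle
      have hpos : 1 ≤ 2 ^ t := Nat.one_le_two_pow
      omega
end

section
/- Let p be an odd prime, G a finite abelian p-group, and H ≤ G a maximal elementary abelian subgroup with H ≅ (ℤ/p)^k. Then the maximum size of a set M ⊆ G with o(xy) = p for all distinct x, y ∈ M equals (p^k + 1)/2. -/
private lemma exists_half_aux {G : Type*} [Group G] [DecidableEq G] :
    ∀ (S : Finset G), (∀ x ∈ S, x⁻¹ ∈ S) → (∀ x ∈ S, x⁻¹ ≠ x) →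
      ∃ T, T ⊆ S ∧ T.card * 2 = S.card ∧ ∀ x ∈ T, x⁻¹ ∉ T := by
  intro S
  induction S using Finset.strongInduction with
  | _ S ih =>
    intro hinv hfix
    rcases S.eq_empty_or_nonempty with rfl | ⟨x, hx⟩
    · exact ⟨∅, by simp⟩
    · have hxi : x⁻¹ ∈ S := hinv x hx
      have hxne : x⁻¹ ≠ x := hfix x hx
      have hpair : ({x, x⁻¹} : Finset G) ⊆ S := by
        intro y hy
        rcases Finset.mem_insert.mp hy with rfl | hy
        · exact hx
        · rw [Finset.mem_singleton.mp hy]; exact hxi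
      have hss : S \ {x, x⁻¹} ⊂ S :=
        Finset.sdiff_ssubset hpair ⟨x, by simp⟩
      have hinv' : ∀ y ∈ S \ {x, x⁻¹}, y⁻¹ ∈ S \ {x, x⁻¹} := by
        intro y hy
        rw [Finset.mem_sdiff] at hy ⊢
        refine ⟨hinv y hy.1, ?_⟩
        simp only [Finset.mem_insert, Finset.mem_singleton] at hy ⊢
        push_neg at hy ⊢
        constructor
        · intro h; exact hy.2.2 (by rw [← h, inv_inv])
        · intro h; exact hy.2.1 (by rw [← inv_inv y, h, inv_inv])
      have hfix' : ∀ y ∈ S \ {x, x⁻¹}, y⁻¹ ≠ y := fun y hy =>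
        hfix y (Finset.mem_sdiff.mp hy).1
      obtain ⟨T, hTsub, hTcard, hTinv⟩ := ih _ hss hinv' hfix'
      have hxT : x ∉ T := fun h => by
        have := Finset.mem_sdiff.mp (hTsub h)
        simp at this
      have hxiT : x⁻¹ ∉ T := fun h => by
        have := Finset.mem_sdiff.mp (hTsub h)
        simp at this
      refine ⟨insert x T, ?_, ?_, ?_⟩
      · intro y hy
        rcases Finset.mem_insert.mp hy with rfl | hy
        · exact hx
        · exact (Finset.mem_sdiff.mp (hTsub hy)).1
      · have hc2 : ({x, x⁻¹} : Finset G).card = 2 := by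
          rw [Finset.card_insert_of_notMem (by simpa using hxne.symm)]
          simp
        have : (S \ {x, x⁻¹}).card = S.card - 2 := by
          rw [Finset.card_sdiff_of_subset hpair, hc2]
        have hS2 : 2 ≤ S.card := hc2 ▸ Finset.card_le_card hpair
        rw [Finset.card_insert_of_notMem hxT]
        omega
      · intro y hy
        rcases Finset.mem_insert.mp hy with rfl | hy
        · intro h
          rcases Finset.mem_insert.mp h with h | h
          · exact hxne h
          · exact hxiT h
        · intro h
          rcases Finset.mem_insert.mp h with h | h
          · have hy2 : y = x⁻¹ := by rw [← inv_inv y, h]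
            have hy3 := (Finset.mem_sdiff.mp (hTsub hy)).2
            simp [hy2] at hy3
          · exact hTinv y hy h

theorem stmt_17 (p : ℕ) (hp : p.Prime) (hodd : Odd p)
    {G : Type*} [CommGroup G] [Fintype G] (hG : IsPGroup p G)
    (H : Subgroup G) (k : ℕ)
    (helem : ∀ h ∈ H, h ^ p = 1)
    (hmax : ∀ K : Subgroup G, (∀ g ∈ K, g ^ p = 1) → H ≤ K → K = H)
    (hcard : Nat.card H = p ^ k) :
    IsGreatest
      {n : ℕ | ∃ M : Finset G, M.card = n ∧
        ∀ x ∈ M, ∀ y ∈ M, x ≠ y → orderOf (x * y) = p}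
      ((p ^ k + 1) / 2) := by
  classical
  haveI : Fact p.Prime := ⟨hp⟩
  have hp3 : 3 ≤ p := by
    rcases hp.two_le.lt_or_eq with h | h
    · omega
    · exfalso; rw [← h] at hodd; exact (Nat.not_odd_iff_even.mpr (by norm_num)) hodd
  -- the subgroup of p-torsion elements
  set K : Subgroup G :=
    { carrier := {g | g ^ p = 1}
      one_mem' := one_pow p
      mul_mem' := fun {a b} ha hb => by
        simp only [Set.mem_setOf_eq] at *
        rw [mul_pow, ha, hb, mul_one]
      inv_mem' := fun {a} ha => by
        simp only [Set.mem_setOf_eq] at *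
        rw [inv_pow, ha, inv_one] } with hK
  have hKmem : ∀ g : G, g ∈ K ↔ g ^ p = 1 := fun g => Iff.rfl
  have hKH : K = H := hmax K (fun g hg => hg) (fun g hg => helem g hg)
  -- p-th powers that square to 1 are trivial
  have hsq : ∀ c : G, c ^ 2 = 1 → c = 1 := by
    intro c hc
    obtain ⟨j, hj⟩ := hG c
    have h1 : orderOf c ∣ 2 := orderOf_dvd_of_pow_eq_one hc
    have h2 : orderOf c ∣ p ^ j := orderOf_dvd_of_pow_eq_one hj
    have hcop : Nat.Coprime 2 (p ^ j) :=
      (Nat.coprime_two_left.mpr (hodd.pow)).symm.symm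
    have : orderOf c ∣ Nat.gcd 2 (p ^ j) := Nat.dvd_gcd h1 h2
    rw [Nat.Coprime] at hcop
    rw [hcop] at this
    exact orderOf_eq_one_iff.mp (Nat.dvd_one.mp this)
  -- the finset of H
  have hHfin : (H : Set G).Finite := Set.toFinite _
  set SH : Finset G := hHfin.toFinset with hSH
  have hSHmem : ∀ g : G, g ∈ SH ↔ g ∈ H := by
    intro g; rw [hSH, Set.Finite.mem_toFinset]; rfl
  have hSHcard : SH.card = p ^ k := by
    rw [← hcard]
    exact (Nat.card_eq_card_finite_toFinset hHfin).symm
  have hpk1 : 1 ≤ p ^ k := Nat.one_le_pow _ _ (by omega)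
  constructor
  · -- membership : construct a clique of size (p^k+1)/2
    have h1SH : (1 : G) ∈ SH := (hSHmem 1).mpr H.one_mem
    set S : Finset G := SH.erase 1 with hS
    have hinvS : ∀ x ∈ S, x⁻¹ ∈ S := by
      intro x hx
      rw [hS, Finset.mem_erase] at hx ⊢
      exact ⟨fun h => hx.1 (by rw [← inv_inv x, h, inv_one]),
        (hSHmem _).mpr (H.inv_mem ((hSHmem x).mp hx.2))⟩
    have hfixS : ∀ x ∈ S, x⁻¹ ≠ x := by
      intro x hx h
      rw [hS, Finset.mem_erase] at hx
      have hx2 : x ^ 2 = 1 := by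
        rw [pow_two]
        nth_rewrite 1 [← h]
        exact inv_mul_cancel x
      exact hx.1 (hsq x hx2)
    obtain ⟨T, hTsub, hTcard, hTinv⟩ := exists_half_aux S hinvS hfixS
    have hScard : S.card = p ^ k - 1 := by
      rw [hS, Finset.card_erase_of_mem h1SH, hSHcard]
    have h1T : (1 : G) ∉ T := fun h => by
      have := hTsub h
      rw [hS, Finset.mem_erase] at this
      exact this.1 rfl
    refine ⟨insert 1 T, ?_, ?_⟩
    · rw [Finset.card_insert_of_notMem h1T]
      omega
    · intro x hx y hy hxy
      have hmem : ∀ z ∈ insert (1:G) T, z ∈ H := by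
        intro z hz
        rcases Finset.mem_insert.mp hz with rfl | hz
        · exact H.one_mem
        · exact (hSHmem z).mp (Finset.mem_erase.mp (hTsub hz)).2
      have hxyH : x * y ∈ H := H.mul_mem (hmem x hx) (hmem y hy)
      have hne : x * y ≠ 1 := by
        intro h
        have hyx : y = x⁻¹ := eq_inv_of_mul_eq_one_right h
        rcases Finset.mem_insert.mp hx with rfl | hxT
        · rw [inv_one] at hyx
          exact hxy hyx.symm
        · rcases Finset.mem_insert.mp hy with rfl | hyT
          · have hx1 : x = 1 := by rw [← inv_inv x, ← hyx, inv_one]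
            exact (Finset.mem_erase.mp (hTsub hxT)).1 hx1
          · rw [hyx] at hyT
            exact hTinv x hxT hyT
      exact orderOf_eq_prime (helem _ hxyH) hne
  · -- upper bound
    rintro n ⟨M, rfl, hM⟩
    rcases le_or_gt M.card 1 with h1 | h1
    · omega
    rcases le_or_gt M.card 2 with h2 | h2
    · -- card = 2 : H is nontrivial so p^k ≥ 3
      obtain ⟨x, hx, y, hy, hxy⟩ := Finset.one_lt_card.mp h1
      have hord := hM x hx y hy hxy
      have hne : x * y ≠ 1 := by
        intro h
        rw [h, orderOf_one] at hord
        omega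
      have hxyK : x * y ∈ H := by
        rw [← hKH, hKmem, ← hord]
        exact pow_orderOf_eq_one _
      have : 1 < Nat.card H := by
        apply Finite.one_lt_card_iff_nontrivial.mpr
        exact ⟨⟨⟨x * y, hxyK⟩, 1, fun h => hne (Subtype.ext_iff.mp h)⟩⟩
      rw [hcard] at this
      have hk1 : k ≠ 0 := by rintro rfl; simp at this
      have : p ≤ p ^ k := Nat.le_self_pow hk1 p
      omega
    · -- card ≥ 3 : all elements are p-torsion, hence in H
      have hptor : ∀ x ∈ M, x ^ p = 1 := by
        intro x hx
        have hcard2 : 1 < (M.erase x).card := by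
          rw [Finset.card_erase_of_mem hx]; omega
        obtain ⟨a, ha, b, hb, hab⟩ := Finset.one_lt_card.mp hcard2
        obtain ⟨hax, haM⟩ := Finset.mem_erase.mp ha
        obtain ⟨hbx, hbM⟩ := Finset.mem_erase.mp hb
        have e1 : x ^ p * a ^ p = 1 := by
          rw [← mul_pow, ← hM x hx a haM (Ne.symm hax)]
          exact pow_orderOf_eq_one _
        have e2 : x ^ p * b ^ p = 1 := by
          rw [← mul_pow, ← hM x hx b hbM (Ne.symm hbx)]
          exact pow_orderOf_eq_one _
        have e3 : a ^ p * b ^ p = 1 := by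
          rw [← mul_pow, ← hM a haM b hbM hab]
          exact pow_orderOf_eq_one _
        have ha' : a ^ p = (x ^ p)⁻¹ := eq_inv_of_mul_eq_one_right e1
        have hb' : b ^ p = (x ^ p)⁻¹ := eq_inv_of_mul_eq_one_right e2
        rw [ha', hb'] at e3
        have hx2 : (x ^ p) ^ 2 = 1 := by
          rw [pow_two, ← inv_inv (x ^ p * x ^ p), mul_inv, e3, inv_one]
        exact hsq _ hx2
      have hMH : ∀ x ∈ M, x ∈ H := by
        intro x hx
        rw [← hKH]
        exact hptor x hx
      set Minv : Finset G := M.image (·⁻¹) with hMinv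
      have hMinvcard : Minv.card = M.card :=
        Finset.card_image_of_injective _ inv_injective
      have hint : M ∩ Minv ⊆ {1} := by
        intro x hx
        rw [Finset.mem_inter] at hx
        obtain ⟨hxM, hxI⟩ := hx
        obtain ⟨y, hyM, hyx⟩ := Finset.mem_image.mp hxI
        rcases eq_or_ne x y with rfl | hne
        · have hx2 : x ^ 2 = 1 := by
            rw [pow_two]
            nth_rewrite 2 [← hyx]
            rw [mul_inv_cancel]
          rw [Finset.mem_singleton]
          exact hsq x hx2
        · exfalso
          have hord := hM x hxM y hyM hne
          rw [← hyx, inv_mul_cancel, orderOf_one] at hord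
          omega
      have hunion : M ∪ Minv ⊆ SH := by
        intro x hx
        rcases Finset.mem_union.mp hx with hx | hx
        · exact (hSHmem x).mpr (hMH x hx)
        · obtain ⟨y, hyM, hyx⟩ := Finset.mem_image.mp hx
          rw [← hyx]
          exact (hSHmem _).mpr (H.inv_mem (hMH y hyM))
      have h1 : (M ∪ Minv).card ≤ p ^ k := hSHcard ▸ Finset.card_le_card hunion
      have h2 : (M ∩ Minv).card ≤ 1 := by
        calc (M ∩ Minv).card ≤ ({1} : Finset G).card := Finset.card_le_card hint
        _ = 1 := Finset.card_singleton 1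
      have h3 : (M ∪ Minv).card + (M ∩ Minv).card = M.card + Minv.card :=
        Finset.card_union_add_card_inter M Minv
      omega
end
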